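/- If a cut (V0, V1) of a connected graph G is convex, then for every edge in the cut-set with endpoint x in V0 and y in V1, every vertex of V0 is at least as close to x as to y, i.e., V0 ⊆ W_{x,y} ∪ {w : d(w,x) = d(w,y)}. -/

import Mathlib

/-- `(V0, V1)` is a cut of the graph `G`: a partition of the vertex set into
two nonempty parts. -/
def IsCut {V : Type*} (V0 V1 : Set V) : Prop :=
  V0.Nonempty ∧ V1.Nonempty ∧ V0 ∪ V1 = Set.univ ∧ Disjoint V0 V1

/-- The cut `(V0, V1)` is convex: no shortest path between two vertices of
one side passes through the other side. -/
def IsConvexCut {V : Type*} (G : SimpleGraph V) (V0 V1 : Set V) : Prop :=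
  IsCut V0 V1 ∧
  (∀ u v : V, u ∈ V0 → v ∈ V0 → ∀ p : G.Walk u v,
      p.length = G.dist u v → ∀ w ∈ p.support, w ∈ V0) ∧
  (∀ u v : V, u ∈ V1 → v ∈ V1 → ∀ p : G.Walk u v,
      p.length = G.dist u v → ∀ w ∈ p.support, w ∈ V1)

/-! If some `w ∈ V0` were strictly closer to `y` than to `x`, a shortest `w`–`y` walk followed by
the edge `yx` would be a shortest `w`–`x` walk, and convexity of `V0` would put `y` into `V0`. -/

namespace SimpleGraph

variable {V : Type*} {G : SimpleGraph V} {w x y : V}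

theorem Adj.exists_walk_length_eq_dist_mem_support_of_dist_lt (hyx : G.Adj y x)
    (h : G.dist w y < G.dist w x) :
    ∃ p : G.Walk w x, p.length = G.dist w x ∧ y ∈ p.support := by
  have hwy : G.Reachable w y :=
    (Reachable.of_dist_ne_zero (by omega : G.dist w x ≠ 0)).trans hyx.symm.reachable
  obtain ⟨p, hp⟩ := hwy.exists_walk_length_eq_dist
  have hle : G.dist w x ≤ G.dist w y + 1 := by
    simpa [dist_eq_one_iff_adj.mpr hyx] using hyx.reachable.dist_triangle_right w
  exact ⟨p.concat hyx, by rw [Walk.length_concat]; omega, by simp⟩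

end SimpleGraph

theorem IsConvexCut.dist_le_of_adj {V : Type*} {G : SimpleGraph V} {V0 V1 : Set V}
    (hcvx : IsConvexCut G V0 V1) {x y w : V} (hx : x ∈ V0) (hy : y ∈ V1) (hxy : G.Adj x y)
    (hw : w ∈ V0) : G.dist w x ≤ G.dist w y := by
  by_contra! h
  obtain ⟨p, hp, hyp⟩ := hxy.symm.exists_walk_length_eq_dist_mem_support_of_dist_lt h
  exact Set.disjoint_left.mp hcvx.1.2.2.2 (hcvx.2.1 w x hw hx p hp y hyp) hy

theorem convexCut_subset_W_general {V : Type*} (G : SimpleGraph V)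
    (V0 V1 : Set V) (hcvx : IsConvexCut G V0 V1)
    (x y : V) (hx : x ∈ V0) (hy : y ∈ V1) (hxy : G.Adj x y) :
    V0 ⊆ {w : V | G.dist w x < G.dist w y} ∪
      {w : V | G.dist w x = G.dist w y} :=
  fun _ hw => (hcvx.dist_le_of_adj hx hy hxy hw).lt_or_eq

/-- For a convex cut `(V0, V1)` of a connected graph and a cut-set edge with
endpoint `x ∈ V0` and `y ∈ V1`, every vertex of `V0` is at least as close to
`x` as to `y`: `V0 ⊆ W_{x,y} ∪ {w : d(w,x) = d(w,y)}`. -/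
theorem convexCut_subset_W {V : Type*} (G : SimpleGraph V)
    (hconn : G.Connected) (V0 V1 : Set V) (hcvx : IsConvexCut G V0 V1)
    (x y : V) (hx : x ∈ V0) (hy : y ∈ V1) (hxy : G.Adj x y) :
    V0 ⊆ {w : V | G.dist w x < G.dist w y} ∪
      {w : V | G.dist w x = G.dist w y} :=
  convexCut_subset_W_general G V0 V1 hcvx x y hx hy hxy
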